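/- Let d ≥ 1, Ω ⊆ ℝ^d open, ρ : Ω → (0,∞) and u : Ω → ℝ^d smooth, h : (0,∞) → ℝ smooth, and φ : (0,∞) → ℝ smooth with ρ φ'(ρ) = h'(ρ) for all ρ > 0. Then on Ω: div( ρ u ⊗ ∇(φ(ρ)) + ρ ∇(φ(ρ)) ⊗ u ) = Δ( h(ρ) u ) − 2 div( h(ρ) Du ) + ∇ div( h(ρ) u ), where Du = (∇u + (∇u)ᵀ)/2. -/

import Mathlib

open MeasureTheory Real

noncomputable section

/-- Partial derivative of a scalar field in the coordinate direction `i`. -/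
def pd {d : ℕ} (i : Fin d) (f : (Fin d → ℝ) → ℝ) (x : Fin d → ℝ) : ℝ :=
  fderiv ℝ f x (Pi.single i 1)

/-- Gradient of a scalar field. -/
def grad {d : ℕ} (f : (Fin d → ℝ) → ℝ) (x : Fin d → ℝ) : Fin d → ℝ :=
  fun i => pd i f x

/-- Divergence of a vector field. -/
def dvg {d : ℕ} (u : (Fin d → ℝ) → (Fin d → ℝ)) (x : Fin d → ℝ) : ℝ :=
  ∑ i, pd i (fun y => u y i) x

/-- Row-wise divergence of a matrix field: `(dvgM M x) i = ∑ j, ∂_j M_{ij}`. -/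
def dvgM {d : ℕ} (M : (Fin d → ℝ) → Fin d → Fin d → ℝ) (x : Fin d → ℝ) : Fin d → ℝ :=
  fun i => ∑ j, pd j (fun y => M y i j) x

/-- Hessian of a scalar field. -/
def hess {d : ℕ} (f : (Fin d → ℝ) → ℝ) (x : Fin d → ℝ) : Fin d → Fin d → ℝ :=
  fun i j => pd i (fun y => pd j f y) x

/-- Laplacian of a scalar field. -/
def lap {d : ℕ} (f : (Fin d → ℝ) → ℝ) (x : Fin d → ℝ) : ℝ :=
  ∑ i, pd i (fun y => pd i f y) x

/-- Jacobian matrix of a vector field: `(jac u x) i j = ∂_j u_i`. -/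
def jac {d : ℕ} (u : (Fin d → ℝ) → (Fin d → ℝ)) (x : Fin d → ℝ) : Fin d → Fin d → ℝ :=
  fun i j => pd j (fun y => u y i) x

/-- Symmetric part of the gradient of a vector field, `Du = (∇u + (∇u)ᵀ)/2`. -/
def symD {d : ℕ} (u : (Fin d → ℝ) → (Fin d → ℝ)) (x : Fin d → ℝ) : Fin d → Fin d → ℝ :=
  fun i j => (jac u x i j + jac u x j i) / 2

/-- Antisymmetric part of the gradient of a vector field, `Au = (∇u − (∇u)ᵀ)/2`. -/
def antiD {d : ℕ} (u : (Fin d → ℝ) → (Fin d → ℝ)) (x : Fin d → ℝ) : Fin d → Fin d → ℝ :=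
  fun i j => (jac u x i j - jac u x j i) / 2

/-- Tensor product of two vectors: `(a ⊗ b)_{ij} = a_i b_j`. -/
def tens {d : ℕ} (a b : Fin d → ℝ) : Fin d → Fin d → ℝ := fun i j => a i * b j

/-- ℤ^d-periodicity: a function of this kind descends to the torus `T^d = ℝ^d/ℤ^d`. -/
def SpacePeriodic {d : ℕ} {E : Type*} (f : (Fin d → ℝ) → E) : Prop :=
  ∀ x : Fin d → ℝ, ∀ n : Fin d → ℤ, f (x + fun i => (n i : ℝ)) = f x

/-- Fundamental domain of the torus `T^d = ℝ^d/ℤ^d` (with its probability Lebesgue measure). -/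
def unitBox (d : ℕ) : Set (Fin d → ℝ) := Set.Icc 0 1

lemma pd_congr {d : ℕ} {f g : (Fin d → ℝ) → ℝ} {x : Fin d → ℝ} (i : Fin d)
    (h : f =ᶠ[nhds x] g) : pd i f x = pd i g x := by
  unfold pd; rw [Filter.EventuallyEq.fderiv_eq h]

lemma pd_contDiffAt {d : ℕ} {f : (Fin d → ℝ) → ℝ} {x : Fin d → ℝ} (i : Fin d)
    (hf : ContDiffAt ℝ (⊤ : ℕ∞) f x) : ContDiffAt ℝ (⊤ : ℕ∞) (pd i f) x := by
  have h1 : ContDiffAt ℝ (⊤ : ℕ∞) (fderiv ℝ f) x := hf.fderiv_right (by simp)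
  exact h1.clm_apply contDiffAt_const

lemma pd_mul {d : ℕ} {f g : (Fin d → ℝ) → ℝ} {x : Fin d → ℝ} (i : Fin d)
    (hf : DifferentiableAt ℝ f x) (hg : DifferentiableAt ℝ g x) :
    pd i (fun y => f y * g y) x = pd i f x * g x + f x * pd i g x := by
  unfold pd; rw [fderiv_fun_mul hf hg]; simp [mul_comm]; ring

lemma fderiv_one_dim (f : ℝ → ℝ) (r a : ℝ) : fderiv ℝ f r a = a * deriv f r := by
  rw [← fderiv_apply_one_eq_deriv]
  calc fderiv ℝ f r a = fderiv ℝ f r (a • 1) := by norm_num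
  _ = a * fderiv ℝ f r 1 := by rw [_root_.map_smul]; rfl

lemma pd_comp {d : ℕ} {f : ℝ → ℝ} {ρ : (Fin d → ℝ) → ℝ} {y : Fin d → ℝ} (i : Fin d)
    (hf : DifferentiableAt ℝ f (ρ y)) (hρ : DifferentiableAt ℝ ρ y) :
    pd i (fun z => f (ρ z)) y = deriv f (ρ y) * pd i ρ y := by
  unfold pd
  rw [show (fun z => f (ρ z)) = f ∘ ρ from rfl, fderiv_comp y hf hρ]
  simp [fderiv_one_dim, mul_comm]

lemma pd_comm {d : ℕ} {f : (Fin d → ℝ) → ℝ} {x : Fin d → ℝ} (i k : Fin d)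
    (hf : ContDiffAt ℝ (⊤ : ℕ∞) f x) :
    pd i (fun y => pd k f y) x = pd k (fun y => pd i f y) x := by
  have hF : ContDiffAt ℝ (⊤ : ℕ∞) (fderiv ℝ f) x := hf.fderiv_right (by simp)
  have hFd : DifferentiableAt ℝ (fderiv ℝ f) x := hF.differentiableAt (by simp)
  have key : ∀ v w : Fin d → ℝ, fderiv ℝ (fun y => fderiv ℝ f y w) x v
      = fderiv ℝ (fderiv ℝ f) x v w := by
    intro v w
    rw [fderiv_clm_apply hFd (differentiableAt_const w)]
    simp
  have hs := hf.isSymmSndFDerivAt (by rw [minSmoothness_of_isRCLikeNormedField]; exact WithTop.coe_le_coe.mpr (le_top : (2 : ℕ∞) ≤ ⊤))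
  unfold pd
  rw [key, key, hs]

lemma pd_comb {d : ℕ} {a b c : (Fin d → ℝ) → ℝ} {x : Fin d → ℝ} (j : Fin d)
    (ha : DifferentiableAt ℝ a x) (hb : DifferentiableAt ℝ b x)
    (hc : DifferentiableAt ℝ c x) :
    pd j (fun y => a y - 2 * b y + c y) x = pd j a x - 2 * pd j b x + pd j c x := by
  unfold pd
  rw [fderiv_fun_add (f := fun y => a y - 2 * b y) (ha.sub (hb.const_mul 2)) hc, fderiv_fun_sub ha (hb.const_mul 2),
    fderiv_const_mul hb 2]
  simp

lemma pd_sum {d n : ℕ} {F : Fin n → (Fin d → ℝ) → ℝ} {x : Fin d → ℝ} (i : Fin d)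
    (hF : ∀ k, DifferentiableAt ℝ (F k) x) :
    pd i (fun y => ∑ k, F k y) x = ∑ k, pd i (F k) x := by
  unfold pd
  rw [fderiv_fun_sum (fun k _ => hF k)]
  simp

theorem statement5 (d : ℕ) (hd : 1 ≤ d) (Ω : Set (Fin d → ℝ)) (hΩ : IsOpen Ω)
    (ρ : (Fin d → ℝ) → ℝ) (hρpos : ∀ x ∈ Ω, 0 < ρ x) (hρ : ContDiffOn ℝ (⊤ : ℕ∞) ρ Ω)
    (u : (Fin d → ℝ) → (Fin d → ℝ)) (hu : ContDiffOn ℝ (⊤ : ℕ∞) u Ω)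
    (h φ : ℝ → ℝ) (hh : ContDiffOn ℝ (⊤ : ℕ∞) h (Set.Ioi 0)) (hφ : ContDiffOn ℝ (⊤ : ℕ∞) φ (Set.Ioi 0))
    (hφ' : ∀ r : ℝ, 0 < r → r * deriv φ r = deriv h r) :
    ∀ x ∈ Ω, ∀ i : Fin d,
      dvgM (fun y i' j => ρ y * u y i' * grad (fun z => φ (ρ z)) y j
          + ρ y * grad (fun z => φ (ρ z)) y i' * u y j) x i
        = lap (fun y => h (ρ y) * u y i) x
          - 2 * dvgM (fun y i' j => h (ρ y) * symD u y i' j) x i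
          + grad (fun y => dvg (fun z => h (ρ z) • u z) y) x i := by
  intro x hx i
  have hΩx : Ω ∈ nhds x := hΩ.mem_nhds hx
  set g : (Fin d → ℝ) → ℝ := fun y => h (ρ y) with hgdef
  -- smoothness at points of Ω
  have cρ : ∀ y ∈ Ω, ContDiffAt ℝ (⊤ : ℕ∞) ρ y := fun y hy => hρ.contDiffAt (hΩ.mem_nhds hy)
  have cu : ∀ y ∈ Ω, ∀ k, ContDiffAt ℝ (⊤ : ℕ∞) (fun z => u z k) y := fun y hy k =>
    (contDiffAt_pi.1 (hu.contDiffAt (hΩ.mem_nhds hy))) k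
  have cg : ∀ y ∈ Ω, ContDiffAt ℝ (⊤ : ℕ∞) g y := fun y hy =>
    ContDiffAt.comp y (hh.contDiffAt (isOpen_Ioi.mem_nhds (hρpos y hy))) (cρ y hy)
  have cP : ∀ k, ∀ y ∈ Ω, ContDiffAt ℝ (⊤ : ℕ∞) (fun z => g z * u z k) y := fun k y hy =>
    (cg y hy).mul (cu y hy k)
  -- key pointwise identity on Ω
  have key : ∀ y ∈ Ω, ∀ k, ρ y * pd k (fun z => φ (ρ z)) y = pd k g y := by
    intro y hy k
    have hρy := hρpos y hy
    have hdρ : DifferentiableAt ℝ ρ y := (cρ y hy).differentiableAt (by simp)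
    have hdφ : DifferentiableAt ℝ φ (ρ y) :=
      (hφ.contDiffAt (isOpen_Ioi.mem_nhds hρy)).differentiableAt (by simp)
    have hdh : DifferentiableAt ℝ h (ρ y) :=
      (hh.contDiffAt (isOpen_Ioi.mem_nhds hρy)).differentiableAt (by simp)
    rw [pd_comp k hdφ hdρ, pd_comp k hdh hdρ, ← hφ' (ρ y) hρy]; ring
  -- canonical functions
  set A : Fin d → (Fin d → ℝ) → ℝ :=
    fun j y => pd j g y * u y i + g y * pd j (fun z => u z i) y with hA
  set B : Fin d → (Fin d → ℝ) → ℝ :=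
    fun j y => g y * ((pd j (fun z => u z i) y + pd i (fun z => u z j) y) / 2) with hB
  set C : Fin d → (Fin d → ℝ) → ℝ :=
    fun j y => pd i g y * u y j + g y * pd i (fun z => u z j) y with hC
  set F : Fin d → (Fin d → ℝ) → ℝ :=
    fun j y => u y i * pd j g y + pd i g y * u y j with hF
  -- differentiability of the canonical functions at x
  have dgx : ContDiffAt ℝ (⊤ : ℕ∞) g x := cg x hx
  have dux : ∀ k, ContDiffAt ℝ (⊤ : ℕ∞) (fun z => u z k) x := cu x hx
  have dA : ∀ j, DifferentiableAt ℝ (A j) x := fun j =>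
    (((pd_contDiffAt j dgx).mul (dux i)).add
      (dgx.mul (pd_contDiffAt j (dux i)))).differentiableAt (by simp)
  have dB : ∀ j, DifferentiableAt ℝ (B j) x := fun j =>
    (dgx.mul (((pd_contDiffAt j (dux i)).add (pd_contDiffAt i (dux j))).div_const 2)
      ).differentiableAt (by simp)
  have dC : ∀ j, DifferentiableAt ℝ (C j) x := fun j =>
    (((pd_contDiffAt i dgx).mul (dux j)).add
      (dgx.mul (pd_contDiffAt i (dux j)))).differentiableAt (by simp)
  -- Step L : left-hand side
  have stepL : ∀ j : Fin d,
      pd j (fun y => ρ y * u y i * pd j (fun z => φ (ρ z)) y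
        + ρ y * pd i (fun z => φ (ρ z)) y * u y j) x = pd j (F j) x := by
    intro j
    apply pd_congr
    filter_upwards [hΩx] with y hy
    simp only [hF]
    rw [← key y hy j, ← key y hy i]; ring
  -- Step R1 : laplacian term
  have stepR1 : ∀ j : Fin d,
      pd j (fun y => pd j (fun z => h (ρ z) * u z i) y) x = pd j (A j) x := by
    intro j
    apply pd_congr
    filter_upwards [hΩx] with y hy
    simp only [hA]
    exact pd_mul j ((cg y hy).differentiableAt (by simp))
      ((cu y hy i).differentiableAt (by simp))
  -- Step R3 : grad div term
  have stepR3 : pd i (fun y => dvg (fun z => h (ρ z) • u z) y) x = ∑ k, pd k (C k) x := by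
    have e1 : pd i (fun y => dvg (fun z => h (ρ z) • u z) y) x
        = pd i (fun y => ∑ k, pd k (fun z => g z * u z k) y) x := by
      apply pd_congr
      filter_upwards with y
      simp only [dvg, Pi.smul_apply, smul_eq_mul, hgdef]
    rw [e1, pd_sum i (fun k =>
      (pd_contDiffAt k (cP k x hx)).differentiableAt (by simp))]
    refine Finset.sum_congr rfl (fun k _ => ?_)
    rw [pd_comm i k (cP k x hx)]
    apply pd_congr
    filter_upwards [hΩx] with y hy
    simp only [hC]
    exact pd_mul i ((cg y hy).differentiableAt (by simp))
      ((cu y hy k).differentiableAt (by simp))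
  -- per-index combination
  have per_j : ∀ j : Fin d, pd j (F j) x = pd j (A j) x - 2 * pd j (B j) x + pd j (C j) x := by
    intro j
    have hFj : F j = fun y => A j y - 2 * B j y + C j y := by
      funext y; simp only [hA, hB, hC, hF]; ring
    rw [hFj, pd_comb j (dA j) (dB j) (dC j)]
  -- assemble
  simp only [dvgM, lap, grad, symD, jac]
  rw [stepR3]
  have eL : (∑ j, pd j (fun y => ρ y * u y i * pd j (fun z => φ (ρ z)) y
      + ρ y * pd i (fun z => φ (ρ z)) y * u y j) x) = ∑ j, pd j (F j) x :=
    Finset.sum_congr rfl (fun j _ => stepL j)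
  have eR1 : (∑ j, pd j (fun y => pd j (fun z => h (ρ z) * u z i) y) x)
      = ∑ j, pd j (A j) x :=
    Finset.sum_congr rfl (fun j _ => stepR1 j)
  have eR2 : (∑ j, pd j (fun y => h (ρ y)
      * ((pd j (fun z => u z i) y + pd i (fun z => u z j) y) / 2)) x)
      = ∑ j, pd j (B j) x := by
    simp only [hB, hgdef]
  rw [eL, eR1, eR2, Finset.sum_congr rfl (fun j (_ : j ∈ Finset.univ) => per_j j),
    Finset.sum_add_distrib, Finset.sum_sub_distrib, Finset.mul_sum]

end
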